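/- arXiv:1904.10687 — 6 statements merged into one kernel-verified Lean document; each statement's English description precedes it below -/
import Mathlib

section
/- Let 0 ≤ β ≤ α ≤ 1. Then the plane is covered by the P-sets and by the Q-sets of the wave packet covering: ℝ² = P₀ ∪ ⋃_{(j,m,ℓ)∈I₀} P_{j,m,ℓ} = Q₀ ∪ ⋃_{(j,m,ℓ)∈I₀} Q_{j,m,ℓ}. -/
noncomputable section

open Real Set MeasureTheory Pointwise
open scoped ENNReal

/-- `ℝ²` with the Euclidean norm. -/
abbrev R2 : Type := EuclideanSpace ℝ (Fin 2)

/-- The vector `(a, b) ∈ ℝ²`. -/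
def vec2 (a b : ℝ) : R2 := (EuclideanSpace.equiv (Fin 2) ℝ).symm ![a, b]

/-- Action of a `2×2` matrix on `ℝ²`. -/
def mulV (M : Matrix (Fin 2) (Fin 2) ℝ) (x : R2) : R2 :=
  (EuclideanSpace.equiv (Fin 2) ℝ).symm (M.mulVec ((EuclideanSpace.equiv (Fin 2) ℝ) x))

/-- Rotation matrix through the angle `θ`. -/
def Rmat (θ : ℝ) : Matrix (Fin 2) (Fin 2) ℝ :=
  !![Real.cos θ, -Real.sin θ; Real.sin θ, Real.cos θ]

/-- The diagonal matrix `A_j = diag(2^{αj}, 2^{βj})`. -/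
def Amat (α β : ℝ) (j : ℕ) : Matrix (Fin 2) (Fin 2) ℝ :=
  !![(2:ℝ) ^ (α * (j:ℝ)), 0; 0, (2:ℝ) ^ (β * (j:ℝ))]

/-- The angle `Θ_{j,ℓ} = 2ℓ·(π/N)·2^{(β − 1)j}`, with `N = 10`. -/
def Theta (β : ℝ) (j ℓ : ℕ) : ℝ :=
  2 * (ℓ:ℝ) * (Real.pi / 10) * (2:ℝ) ^ ((β - 1) * (j:ℝ))

/-- The translation `c_{j,m} = (2^{j−1} + m·2^{αj}, 0)ᵗ`. -/
def cvec (α : ℝ) (j m : ℕ) : R2 :=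
  vec2 ((2:ℝ) ^ ((j:ℝ) - 1) + (m:ℝ) * (2:ℝ) ^ (α * (j:ℝ))) 0

/-- The base set `Q = (−ε, 1+ε) × (−1−ε, 1+ε)`. -/
def baseQ (ε : ℝ) : Set R2 :=
  {x : R2 | x 0 ∈ Set.Ioo (-ε) (1+ε) ∧ x 1 ∈ Set.Ioo (-1-ε) (1+ε)}

/-- `m_j^max = ⌈2^{(1−α)j−1}⌉`. -/
def mjmax (α : ℝ) (j : ℕ) : ℤ := ⌈(2:ℝ) ^ ((1-α) * (j:ℝ) - 1)⌉

/-- `ℓ_j^max = ⌈N·2^{(1−β)j}⌉`, with `N = 10`. -/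
def ljmax (β : ℝ) (j : ℕ) : ℤ := ⌈(10:ℝ) * (2:ℝ) ^ ((1-β) * (j:ℝ))⌉

/-- Membership of a triple `(j,m,ℓ)` in the index set
`I₀ = {(j,m,ℓ) ∈ ℕ × ℕ₀ × ℕ₀ : m ≤ m_j^max, ℓ ≤ ℓ_j^max}` (with `ℕ = {1,2,…}`). -/
def memI0 (α β : ℝ) (i : ℕ × ℕ × ℕ) : Prop :=
  1 ≤ i.1 ∧ (i.2.1 : ℤ) ≤ mjmax α i.1 ∧ (i.2.2 : ℤ) ≤ ljmax β i.1

/-- The set `Q_{j,m,ℓ} = R_{j,ℓ}(A_j·Q + c_{j,m})`. -/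
def Qset (α β ε : ℝ) (j m ℓ : ℕ) : Set R2 :=
  (fun x => mulV (Rmat (Theta β j ℓ)) (mulV (Amat α β j) x + cvec α j m)) '' baseQ ε

/-- The base set `P = [0,1] × [−1,1]`. -/
def baseP : Set R2 := {x : R2 | x 0 ∈ Set.Icc (0:ℝ) 1 ∧ x 1 ∈ Set.Icc (-1:ℝ) 1}

/-- The set `P_{j,m,ℓ} = R_{j,ℓ}(A_j·P + c_{j,m})`. -/
def Pset (α β : ℝ) (j m ℓ : ℕ) : Set R2 :=
  (fun x => mulV (Rmat (Theta β j ℓ)) (mulV (Amat α β j) x + cvec α j m)) '' baseP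

/-!
Write a point of norm at least `3` in polar coordinates `(r, φ)` and let `t_j = Θ_{j,1}` be the
angular step at scale `j`. The inequality `2^{j-1} ≤ r cos t_j` holds at `j = 1` and fails for
large `j`, so some `j ≥ 1` satisfies it while `r cos t_{j+1} < 2^j`. Since `t_{j+1}² ≤ 2^{(α-1)j}`
the latter forces `r < 2^j + 2^{αj}`, and since `cos t_{j+1} ≥ 4/5` it gives `r t_j ≤ 2^{βj}`. Rounding `φ` down to a multiple `ℓ t_j` leaves an
angle `ψ ∈ [0, t_j)`, so undoing the rotation `R_{j,ℓ}` moves the point to `(r cos ψ, r sin ψ)`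
with `2^{j-1} ≤ r cos ψ < 2^j + 2^{αj}` and `|r sin ψ| ≤ 2^{βj}`: it lies in one of the boxes
`A_j P + c_{j,m}`, `0 ≤ m ≤ m_j^max`. The `Q`-sets contain the `P`-sets.
-/

@[simp] lemma vec2_apply_zero (a b : ℝ) : vec2 a b 0 = a := by simp [vec2]

@[simp] lemma vec2_apply_one (a b : ℝ) : vec2 a b 1 = b := by simp [vec2]

@[simp] lemma mulV_apply_zero (M : Matrix (Fin 2) (Fin 2) ℝ) (x : R2) :
    mulV M x 0 = M 0 0 * x 0 + M 0 1 * x 1 := by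
  simp [mulV]

@[simp] lemma mulV_apply_one (M : Matrix (Fin 2) (Fin 2) ℝ) (x : R2) :
    mulV M x 1 = M 1 0 * x 0 + M 1 1 * x 1 := by
  simp [mulV]

lemma R2_ext {x y : R2} (h0 : x 0 = y 0) (h1 : x 1 = y 1) : x = y := by
  ext i; fin_cases i; exacts [h0, h1]

lemma mulV_Rmat_vec2_polar (θ r ψ : ℝ) :
    mulV (Rmat θ) (vec2 (r * cos ψ) (r * sin ψ)) = vec2 (r * cos (θ + ψ)) (r * sin (θ + ψ)) := by
  apply R2_ext <;> simp [Rmat, cos_add, sin_add] <;> ring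

lemma exists_eq_vec2_polar (x : R2) :
    ∃ φ ∈ Ico 0 (2 * π), x = vec2 (‖x‖ * cos φ) (‖x‖ * sin φ) := by
  set z := Complex.orthonormalBasisOneI.repr.symm x
  have hz : ‖z‖ = ‖x‖ := LinearIsometryEquiv.norm_map _ _
  refine ⟨toIcoMod two_pi_pos 0 z.arg, by simpa using toIcoMod_mem_Ico two_pi_pos 0 z.arg, ?_⟩
  rw [toIcoMod, zsmul_eq_mul, cos_sub_int_mul_two_pi, sin_sub_int_mul_two_pi, ← hz,
    Complex.norm_mul_cos_arg, Complex.norm_mul_sin_arg]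
  apply R2_ext <;> simp [z]

lemma mulV_Rmat_vec2_mem_Pset {α β a b : ℝ} {j m ℓ : ℕ}
    (ha : 2 ^ ((j:ℝ) - 1) + m * 2 ^ (α * j) ≤ a)
    (ha' : a ≤ 2 ^ ((j:ℝ) - 1) + (m + 1) * 2 ^ (α * j)) (hb : |b| ≤ 2 ^ (β * j)) :
    mulV (Rmat (Theta β j ℓ)) (vec2 a b) ∈ Pset α β j m ℓ := by
  have hα : 0 < (2:ℝ) ^ (α * j) := by positivity
  have hβ : 0 < (2:ℝ) ^ (β * j) := by positivity
  refine ⟨vec2 ((a - (2 ^ ((j:ℝ) - 1) + m * 2 ^ (α * j))) / 2 ^ (α * j)) (b / 2 ^ (β * j)),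
    ⟨?_, ?_⟩, ?_⟩
  · simp only [vec2_apply_zero, mem_Icc, div_le_one hα]
    exact ⟨div_nonneg (by linarith) hα.le, by linarith⟩
  · rw [vec2_apply_one, mem_Icc, ← abs_le, abs_div, abs_of_pos hβ, div_le_one hβ]
    exact hb
  · apply R2_ext <;> simp [Amat, cvec] <;> field_simp <;> ring

lemma Pset_subset_Qset {α β ε : ℝ} (hε : 0 < ε) (j m ℓ : ℕ) :
    Pset α β j m ℓ ⊆ Qset α β ε j m ℓ := by
  refine image_mono fun w ⟨⟨h₀, h₀'⟩, h₁, h₁'⟩ => ?_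
  exact ⟨⟨by linarith, by linarith⟩, by linarith, by linarith⟩

lemma two_rpow_mul_natCast_le_one {a : ℝ} (ha : a ≤ 0) (j : ℕ) : (2:ℝ) ^ (a * j) ≤ 1 :=
  rpow_le_one_of_one_le_of_nonpos one_le_two (mul_nonpos_of_nonpos_of_nonneg ha j.cast_nonneg)

lemma Theta_eq_mul (β : ℝ) (j ℓ : ℕ) : Theta β j ℓ = ℓ * Theta β j 1 := by
  simp only [Theta, Nat.cast_one]; ring

lemma Theta_one_pos (β : ℝ) (j : ℕ) : 0 < Theta β j 1 := by
  unfold Theta; positivity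

lemma Theta_one_le {β : ℝ} (hβ : β ≤ 1) (j : ℕ) : Theta β j 1 ≤ π / 5 := by
  have := two_rpow_mul_natCast_le_one (by linarith : β - 1 ≤ 0) j
  unfold Theta
  nlinarith [pi_pos]

lemma two_pow_mul_Theta_one (β : ℝ) (j : ℕ) :
    2 ^ (j:ℝ) * Theta β j 1 = π / 5 * 2 ^ (β * j) := by
  rw [Theta, mul_comm, mul_assoc, ← rpow_add two_pos]
  ring_nf

lemma Theta_one_mul_two_pow (β : ℝ) (j : ℕ) :
    Theta β j 1 * 2 ^ ((1 - β) * j) = π / 5 := by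
  have h : (2:ℝ) ^ ((β - 1) * j) * 2 ^ ((1 - β) * j) = 1 := by
    rw [← rpow_add two_pos]; ring_nf; exact rpow_zero 2
  rw [Theta]
  linear_combination (π / 5) * h

lemma exists_angle_index (β : ℝ) (j : ℕ) {φ : ℝ} (hφ : φ ∈ Ico 0 (2 * π)) :
    ∃ ℓ : ℕ, (ℓ:ℤ) ≤ ljmax β j ∧ φ - Theta β j ℓ ∈ Ico 0 (Theta β j 1) := by
  set t := Theta β j 1
  have ht : 0 < t := Theta_one_pos β j
  set ℓ := ⌊φ / t⌋₊
  have hℓ : ℓ ≤ φ / t := Nat.floor_le (div_nonneg hφ.1 ht.le)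
  refine ⟨ℓ, ?_, ?_⟩
  · have hperiod : 2 * π / t = 10 * 2 ^ ((1 - β) * j) := by
      rw [div_eq_iff ht.ne']; linear_combination -10 * Theta_one_mul_two_pow β j
    rw [ljmax, Int.le_ceil_iff]
    push_cast
    linarith [div_lt_div_of_pos_right hφ.2 ht]
  · rw [Theta_eq_mul β j ℓ, mem_Ico, sub_nonneg, sub_lt_iff_lt_add', ← le_div_iff₀ ht,
      ← add_one_mul, ← div_lt_iff₀ ht]
    exact ⟨hℓ, Nat.lt_floor_add_one _⟩

lemma exists_translation_index (α : ℝ) (j : ℕ) {u : ℝ} (hu : 2 ^ ((j:ℝ) - 1) ≤ u)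
    (hu' : u < 2 ^ (j:ℝ) + 2 ^ (α * j)) :
    ∃ m : ℕ, (m:ℤ) ≤ mjmax α j ∧ 2 ^ ((j:ℝ) - 1) + m * 2 ^ (α * j) ≤ u ∧
      u ≤ 2 ^ ((j:ℝ) - 1) + (m + 1) * 2 ^ (α * j) := by
  set c : ℝ := 2 ^ ((j:ℝ) - 1)
  set s : ℝ := 2 ^ (α * j)
  have hs : 0 < s := by positivity
  have hcs : c / s = 2 ^ ((1 - α) * j - 1) := by
    rw [← rpow_sub two_pos]; ring_nf
  have h2c : (2:ℝ) ^ (j:ℝ) = 2 * c := by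
    simp only [c, rpow_sub_one two_ne_zero]; ring
  set m := ⌊(u - c) / s⌋₊
  have hm : m ≤ (u - c) / s := Nat.floor_le (div_nonneg (sub_nonneg.2 hu) hs.le)
  have hm' : (u - c) / s < m + 1 := Nat.lt_floor_add_one _
  refine ⟨m, ?_, ?_, ?_⟩
  · have : (u - c) / s < c / s + 1 := by
      rw [div_add_one hs.ne']; exact div_lt_div_of_pos_right (by linarith) hs
    rw [mjmax, Int.le_ceil_iff, ← hcs]
    push_cast
    linarith
  · rw [le_div_iff₀ hs] at hm; linarith
  · rw [div_lt_iff₀ hs] at hm'; linarith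

lemma four_fifths_le_cos_Theta_one {β : ℝ} (hβ : β ≤ 1) (j : ℕ) :
    4 / 5 ≤ cos (Theta β j 1) := by
  have := Theta_one_le hβ j
  have := Theta_one_pos β j
  nlinarith [one_sub_sq_div_two_le_cos (x := Theta β j 1), pi_lt_d2]

lemma Theta_one_succ_sq_le {α β : ℝ} (hβα : β ≤ α) (hα1 : α ≤ 1) (j : ℕ) :
    Theta β (j + 1) 1 ^ 2 ≤ 2 ^ ((α - 1) * j) := by
  set e := (β - 1) * ((j:ℝ) + 1)
  have hexp : e + e ≤ (α - 1) * j := by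
    nlinarith [j.cast_nonneg (α := ℝ)]
  have hsq : Theta β (j + 1) 1 ^ 2 = (π / 5) ^ 2 * 2 ^ (e + e) := by
    rw [rpow_add two_pos, Theta]; push_cast; ring
  rw [hsq]
  refine (mul_le_of_le_one_left (by positivity) ?_).trans
    (rpow_le_rpow_of_exponent_le one_le_two hexp)
  nlinarith [pi_pos, pi_lt_d2]

lemma exists_ge_and_not_succ {G : ℕ → Prop} {a n : ℕ} (ha : G a) (hn : ¬ G n) (han : a ≤ n) :
    ∃ j ≥ a, G j ∧ ¬ G (j + 1) := by
  by_contra! h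
  exact hn (Nat.le_induction ha h n han)

lemma exists_scale {β r : ℝ} (hβ : β ≤ 1) (hr : 5 / 4 ≤ r) :
    ∃ j : ℕ, 1 ≤ j ∧ 2 ^ ((j:ℝ) - 1) ≤ r * cos (Theta β j 1) ∧
      r * cos (Theta β (j + 1) 1) < 2 ^ (j:ℝ) := by
  obtain ⟨n, hn⟩ := pow_unbounded_of_one_lt r one_lt_two
  have hG₁ : 2 ^ (((1 : ℕ) : ℝ) - 1) ≤ r * cos (Theta β 1 1) := by
    rw [Nat.cast_one, sub_self, rpow_zero]
    nlinarith [four_fifths_le_cos_Theta_one hβ 1]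
  have hGn : ¬ 2 ^ (((n + 1 : ℕ) : ℝ) - 1) ≤ r * cos (Theta β (n + 1) 1) := by
    push_cast; rw [add_sub_cancel_right, rpow_natCast, not_le]
    nlinarith [cos_le_one (Theta β (n + 1) 1)]
  obtain ⟨j, hj, hGj, hG⟩ := exists_ge_and_not_succ
    (G := fun k : ℕ => 2 ^ ((k:ℝ) - 1) ≤ r * cos (Theta β k 1)) hG₁ hGn (by omega)
  refine ⟨j, hj, hGj, ?_⟩
  push_cast at hG
  rwa [add_sub_cancel_right, not_le] at hG

lemma lt_two_pow_add_two_pow_of_mul_cos_lt {α β r : ℝ} (hβα : β ≤ α) (hα1 : α ≤ 1) {j : ℕ}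
    (h : r * cos (Theta β (j + 1) 1) < 2 ^ (j:ℝ)) : r < 2 ^ (j:ℝ) + 2 ^ (α * j) := by
  have hcos := four_fifths_le_cos_Theta_one (hβα.trans hα1) (j + 1)
  have hsq := Theta_one_succ_sq_le hβα hα1 j
  have hpow : (2:ℝ) ^ (j:ℝ) * 2 ^ ((α - 1) * j) = 2 ^ (α * j) := by
    rw [← rpow_add two_pos]; ring_nf
  have hαj := two_rpow_mul_natCast_le_one (by linarith : α - 1 ≤ 0) j
  have : (0:ℝ) < 2 ^ (j:ℝ) := by positivity
  have : (0:ℝ) < 2 ^ (α * j) := by positivity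
  by_contra! hr
  nlinarith [one_sub_sq_div_two_le_cos (x := Theta β (j + 1) 1)]

lemma mul_Theta_one_le_of_mul_cos_lt {β r : ℝ} (hβ : β ≤ 1) {j : ℕ}
    (h : r * cos (Theta β (j + 1) 1) < 2 ^ (j:ℝ)) : r * Theta β j 1 ≤ 2 ^ (β * j) := by
  have hcos := four_fifths_le_cos_Theta_one hβ (j + 1)
  have ht := Theta_one_pos β j
  have hpow := two_pow_mul_Theta_one β j
  have : (0:ℝ) < 2 ^ (β * j) := by positivity
  nlinarith [pi_lt_d2]

lemma exists_mem_Pset_of_three_le_norm {α β : ℝ} (hβα : β ≤ α) (hα1 : α ≤ 1) {x : R2}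
    (hx : 3 ≤ ‖x‖) : ∃ i, memI0 α β i ∧ x ∈ Pset α β i.1 i.2.1 i.2.2 := by
  obtain ⟨φ, hφ, hxφ⟩ := exists_eq_vec2_polar x
  set r := ‖x‖
  have hr : 0 ≤ r := norm_nonneg x
  have hβ1 : β ≤ 1 := hβα.trans hα1
  obtain ⟨j, hj, hlow, hhigh⟩ := exists_scale hβ1 (by linarith : 5 / 4 ≤ r)
  obtain ⟨ℓ, hℓ, hψ⟩ := exists_angle_index β j hφ
  set ψ := φ - Theta β j ℓ
  have hcos : cos (Theta β j 1) ≤ cos ψ :=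
    cos_le_cos_of_nonneg_of_le_pi hψ.1 (by linarith [hψ.2, Theta_one_le hβ1 j, pi_pos]) hψ.2.le
  obtain ⟨m, hm, hm₁, hm₂⟩ := exists_translation_index α j (u := r * cos ψ)
    (hlow.trans (mul_le_mul_of_nonneg_left hcos hr))
    ((mul_le_of_le_one_right hr (cos_le_one ψ)).trans_lt
      (lt_two_pow_add_two_pow_of_mul_cos_lt hβα hα1 hhigh))
  have hsin : |r * sin ψ| ≤ 2 ^ (β * j) :=
    calc |r * sin ψ| = r * |sin ψ| := by rw [abs_mul, abs_of_nonneg hr]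
      _ ≤ r * Theta β j 1 := by
        refine mul_le_mul_of_nonneg_left ?_ hr
        exact abs_sin_le_abs.trans ((abs_of_nonneg hψ.1).trans_le hψ.2.le)
      _ ≤ 2 ^ (β * j) := mul_Theta_one_le_of_mul_cos_lt hβ1 hhigh
  refine ⟨(j, m, ℓ), ⟨hj, hm, hℓ⟩, ?_⟩
  rw [hxφ, show φ = Theta β j ℓ + ψ by ring, ← mulV_Rmat_vec2_polar]
  exact mulV_Rmat_vec2_mem_Pset hm₁ hm₂ hsin

theorem wavePacket_covering_covers_general (α β ε : ℝ)
    (hβα : β ≤ α) (hα1 : α ≤ 1) (hε : ε ∈ Set.Ioo (0:ℝ) (1/32)) :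
    (Metric.ball (0:R2) 3 ∪
        ⋃ (i : ℕ × ℕ × ℕ) (_ : memI0 α β i), Pset α β i.1 i.2.1 i.2.2)
      = (Set.univ : Set R2) ∧
    (Metric.ball (0:R2) 4 ∪
        ⋃ (i : ℕ × ℕ × ℕ) (_ : memI0 α β i), Qset α β ε i.1 i.2.1 i.2.2)
      = (Set.univ : Set R2) := by
  have hcover (x : R2) : ‖x‖ < 3 ∨ ∃ i, memI0 α β i ∧ x ∈ Pset α β i.1 i.2.1 i.2.2 :=
    (lt_or_ge _ _).imp_right (exists_mem_Pset_of_three_le_norm hβα hα1)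
  constructor <;> refine eq_univ_of_forall fun x => ?_ <;> rcases hcover x with hx | ⟨i, hi, hx⟩
  · exact Or.inl (mem_ball_zero_iff.2 hx)
  · exact Or.inr (mem_iUnion₂.2 ⟨i, hi, hx⟩)
  · exact Or.inl (mem_ball_zero_iff.2 (by linarith))
  · exact Or.inr (mem_iUnion₂.2 ⟨i, hi, Pset_subset_Qset hε.1 _ _ _ hx⟩)

/-- For `0 ≤ β ≤ α ≤ 1`, the plane is covered by the `P`-sets and by the
`Q`-sets of the wave packet covering:
`ℝ² = P₀ ∪ ⋃_{(j,m,ℓ)∈I₀} P_{j,m,ℓ} = Q₀ ∪ ⋃_{(j,m,ℓ)∈I₀} Q_{j,m,ℓ}`,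
where `P₀ = B₃(0)` and `Q₀ = B₄(0)`. -/
theorem wavePacket_covering_covers (α β ε : ℝ)
    (hβ0 : 0 ≤ β) (hβα : β ≤ α) (hα1 : α ≤ 1) (hε : ε ∈ Set.Ioo (0:ℝ) (1/32)) :
    (Metric.ball (0:R2) 3 ∪
        ⋃ (i : ℕ × ℕ × ℕ) (_ : memI0 α β i), Pset α β i.1 i.2.1 i.2.2)
      = (Set.univ : Set R2) ∧
    (Metric.ball (0:R2) 4 ∪
        ⋃ (i : ℕ × ℕ × ℕ) (_ : memI0 α β i), Qset α β ε i.1 i.2.1 i.2.2)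
      = (Set.univ : Set R2) :=
  wavePacket_covering_covers_general α β ε hβα hα1 hε
end
end

section
/- Let 0 ≤ β ≤ α ≤ 1. For every (j,m,ℓ) ∈ I₀ and every j' ∈ ℕ, the set {m' ∈ ℕ₀ : there exists ℓ' ∈ ℕ₀ such that (j',m',ℓ') ∈ I₀ and Q_{j,m,ℓ} ∩ Q_{j',m',ℓ'} ≠ ∅} has at most 5 elements. -/
/-!
Rotations preserve the norm, so every point of `Q_{j,m,ℓ}` lies in the annulus
`2^{j-1} + (m - 1/32)·2^{αj} ≤ ‖p‖ ≤ 2^{j-1} + (m + 9/4)·2^{αj}`; the outer radius comes from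
`√(u² + v²) ≤ u + v²/(2u)` and `2^{2βj} ≤ 2^j·2^{αj}`. Two indices `m₁, m₂` at scale `j'` whose
packets meet `Q_{j,m,ℓ}` therefore have annuli overlapping that of `Q_{j,m,ℓ}`. For `j ≤ j'` the
annulus at scale `j` is at most as thick as the ones at scale `j'`, which forces `m₁ < m₂ + 5`.
For `j' < j` the packet `Q_{j,m,ℓ}` lies so far out that every such `m'` exceeds
`2^{(1-α)j'-1} - 4`, while `m' ≤ m_{j'}^max < 2^{(1-α)j'-1} + 1`.
-/

noncomputable section

open Real Set MeasureTheory Pointwise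
open scoped ENNReal

lemma mulV_apply (M : Matrix (Fin 2) (Fin 2) ℝ) (x : R2) (i : Fin 2) :
    mulV M x i = M i 0 * x 0 + M i 1 * x 1 := by
  fin_cases i <;> simp [mulV, EuclideanSpace.equiv]

lemma norm_sq_R2 (x : R2) : ‖x‖ ^ 2 = x 0 ^ 2 + x 1 ^ 2 := by
  simp [EuclideanSpace.real_norm_sq_eq, Fin.sum_univ_two]

lemma norm_mulV_Rmat (θ : ℝ) (y : R2) : ‖mulV (Rmat θ) y‖ = ‖y‖ := by
  rw [← sq_eq_sq₀ (norm_nonneg _) (norm_nonneg _), norm_sq_R2, norm_sq_R2, mulV_apply, mulV_apply]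
  simp only [Rmat, Matrix.of_apply, Matrix.cons_val', Matrix.cons_val_zero, Matrix.cons_val_one,
    Matrix.empty_val', Matrix.cons_val_fin_one]
  linear_combination (y 0 ^ 2 + y 1 ^ 2) * sin_sq_add_cos_sq θ

lemma apply_zero_le_norm (y : R2) : y 0 ≤ ‖y‖ :=
  (le_abs_self _).trans (PiLp.norm_apply_le y 0)

lemma norm_le_apply_zero_add (y : R2) (hy : 0 < y 0) : ‖y‖ ≤ y 0 + y 1 ^ 2 / (2 * y 0) := by
  have hw : 0 ≤ y 1 ^ 2 / (2 * y 0) := by positivity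
  rw [← pow_le_pow_iff_left₀ (norm_nonneg _) (by linarith) two_ne_zero, norm_sq_R2]
  have : y 0 * (y 1 ^ 2 / (2 * y 0)) = y 1 ^ 2 / 2 := by field_simp
  nlinarith [sq_nonneg (y 1 ^ 2 / (2 * y 0))]

lemma two_rpow_mul_le_two_rpow {α : ℝ} (hα1 : α ≤ 1) (j : ℕ) :
    (2:ℝ) ^ (α * (j:ℝ)) ≤ (2:ℝ) ^ (j:ℝ) :=
  rpow_le_rpow_of_exponent_le one_le_two (by nlinarith [(Nat.cast_nonneg j : (0:ℝ) ≤ j)])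

lemma sq_two_rpow_le {α β : ℝ} (hβα : β ≤ α) (hα1 : α ≤ 1) (j : ℕ) :
    ((2:ℝ) ^ (β * (j:ℝ))) ^ 2 ≤ (2:ℝ) ^ (j:ℝ) * (2:ℝ) ^ (α * (j:ℝ)) := by
  rw [← rpow_two, ← rpow_mul zero_le_two, ← rpow_add two_pos]
  exact rpow_le_rpow_of_exponent_le one_le_two (by nlinarith [(Nat.cast_nonneg j : (0:ℝ) ≤ j)])

lemma mulV_Amat_add_cvec_apply_zero (α β : ℝ) (j m : ℕ) (x : R2) :
    (mulV (Amat α β j) x + cvec α j m) 0 =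
      (2:ℝ) ^ ((j:ℝ) - 1) + ((m:ℝ) + x 0) * (2:ℝ) ^ (α * (j:ℝ)) := by
  simp [mulV_apply, Amat, cvec]
  ring

lemma mulV_Amat_add_cvec_apply_one (α β : ℝ) (j m : ℕ) (x : R2) :
    (mulV (Amat α β j) x + cvec α j m) 1 = (2:ℝ) ^ (β * (j:ℝ)) * x 1 := by
  simp [mulV_apply, Amat, cvec]

def shellRadius (α : ℝ) (j : ℕ) (t : ℝ) : ℝ :=
  (2:ℝ) ^ ((j:ℝ) - 1) + t * (2:ℝ) ^ (α * (j:ℝ))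

lemma shellRadius_le_norm_of_mem_Qset {α β ε : ℝ} (hε : ε < 1/32) {j m ℓ : ℕ} {p : R2}
    (hp : p ∈ Qset α β ε j m ℓ) : shellRadius α j (m - 1/32) ≤ ‖p‖ := by
  obtain ⟨x, ⟨⟨hx₀, -⟩, -⟩, rfl⟩ := hp
  rw [norm_mulV_Rmat]
  refine le_trans ?_ (apply_zero_le_norm _)
  rw [mulV_Amat_add_cvec_apply_zero, shellRadius]
  gcongr
  linarith

lemma norm_le_shellRadius_of_mem_Qset {α β ε : ℝ} (hβα : β ≤ α) (hα1 : α ≤ 1) (hε : ε < 1/32)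
    {j m ℓ : ℕ} {p : R2} (hp : p ∈ Qset α β ε j m ℓ) : ‖p‖ ≤ shellRadius α j (m + 9/4) := by
  obtain ⟨x, ⟨⟨hx₀, hx₀'⟩, ⟨hx₁, hx₁'⟩⟩, rfl⟩ := hp
  set y := mulV (Amat α β j) x + cvec α j m
  set s := (2:ℝ) ^ (j:ℝ)
  set a := (2:ℝ) ^ (α * (j:ℝ))
  have hr : (2:ℝ) ^ ((j:ℝ) - 1) = s / 2 := rpow_sub_one two_ne_zero _
  have ha : 0 < a := by positivity
  have has : a ≤ s := two_rpow_mul_le_two_rpow hα1 j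
  have hb : ((2:ℝ) ^ (β * (j:ℝ))) ^ 2 ≤ s * a := sq_two_rpow_le hβα hα1 j
  have hm : (0:ℝ) ≤ m := Nat.cast_nonneg m
  have hy₀ : y 0 = s / 2 + (m + x 0) * a := by rw [mulV_Amat_add_cvec_apply_zero, hr]
  have hy₀_pos : 0 < y 0 := by rw [hy₀]; nlinarith [(by positivity : (0:ℝ) < s)]
  have hy₁ : y 1 ^ 2 ≤ (33/32) ^ 2 * (s * a) := by
    rw [mulV_Amat_add_cvec_apply_one, mul_pow]
    have : x 1 ^ 2 ≤ (33/32) ^ 2 := by nlinarith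
    nlinarith [sq_nonneg (2 ^ (β * (j:ℝ)) : ℝ)]
  -- `y 0 ≤ s/2 + (m + 33/32)·a`, and `33/32 + 39/32 = 9/4`
  have hcorr : y 1 ^ 2 / (2 * y 0) ≤ (39/32) * a := by
    rw [div_le_iff₀ (by positivity), hy₀]
    have hx₀a : 0 ≤ (x 0 + 1/32) * a := mul_nonneg (by linarith) ha.le
    nlinarith [mul_nonneg ha.le (sub_nonneg.2 has), mul_nonneg ha.le hx₀a, mul_nonneg ha.le hm]
  rw [norm_mulV_Rmat, shellRadius, hr]
  refine (norm_le_apply_zero_add y hy₀_pos).trans ?_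
  rw [hy₀] at hcorr ⊢
  nlinarith

lemma lt_add_five_of_shells_overlap {α : ℝ} (hα0 : 0 ≤ α) {j j' : ℕ} (hjj' : j ≤ j')
    {m m₁ m₂ : ℝ} (h₁ : shellRadius α j' (m₁ - 1/32) ≤ shellRadius α j (m + 9/4))
    (h₂ : shellRadius α j (m - 1/32) ≤ shellRadius α j' (m₂ + 9/4)) : m₁ < m₂ + 5 := by
  have had : (2:ℝ) ^ (α * (j:ℝ)) ≤ (2:ℝ) ^ (α * (j':ℝ)) :=
    rpow_le_rpow_of_exponent_le one_le_two (by gcongr)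
  have hd : (0:ℝ) < (2:ℝ) ^ (α * (j':ℝ)) := by positivity
  unfold shellRadius at h₁ h₂
  by_contra! h
  nlinarith

lemma two_rpow_add_lt_of_lt {α : ℝ} (hα1 : α ≤ 1) {j j' : ℕ} (h : j' < j) :
    (2:ℝ) ^ (j':ℝ) + (2:ℝ) ^ (α * (j:ℝ)) / 32 <
      (2:ℝ) ^ ((j:ℝ) - 1) + 7/4 * (2:ℝ) ^ (α * (j':ℝ)) := by
  obtain ⟨k, rfl⟩ := Nat.exists_eq_add_of_lt h
  set d := (2:ℝ) ^ (α * (j':ℝ))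
  have hP : (2:ℝ) ^ ((↑(j' + k + 1) : ℝ) - 1) = 2 ^ (j':ℝ) * 2 ^ (k:ℝ) := by
    rw [← rpow_add two_pos]; push_cast; ring_nf
  have ha : (2:ℝ) ^ (α * (↑(j' + k + 1) : ℝ)) = d * 2 ^ (α * ((k + 1 : ℕ) : ℝ)) := by
    rw [← rpow_add two_pos]; push_cast; ring_nf
  have hak : (2:ℝ) ^ (α * ((k + 1 : ℕ) : ℝ)) ≤ 2 * 2 ^ (k:ℝ) := by
    refine (two_rpow_mul_le_two_rpow hα1 (k + 1)).trans_eq ?_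
    rw [Nat.cast_succ, rpow_add_one two_ne_zero, mul_comm]
  have hdP : d ≤ 2 ^ (j':ℝ) := two_rpow_mul_le_two_rpow hα1 j'
  have hd : 0 < d := by positivity
  have ht : (1:ℝ) ≤ 2 ^ (k:ℝ) := one_le_rpow one_le_two (Nat.cast_nonneg k)
  rw [hP, ha]
  nlinarith [mul_le_mul_of_nonneg_left hak hd.le, mul_nonneg (sub_nonneg.2 hdP) (sub_nonneg.2 ht)]

lemma two_rpow_lt_add_four_of_shells_overlap {α : ℝ} (hα1 : α ≤ 1) {j j' : ℕ} (h : j' < j)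
    {m m₂ : ℝ} (hm : 0 ≤ m) (h₂ : shellRadius α j (m - 1/32) ≤ shellRadius α j' (m₂ + 9/4)) :
    (2:ℝ) ^ ((1 - α) * (j':ℝ) - 1) < m₂ + 4 := by
  have hd : (0:ℝ) < (2:ℝ) ^ (α * (j':ℝ)) := by positivity
  have hMd : (2:ℝ) ^ ((1 - α) * (j':ℝ) - 1) * 2 ^ (α * (j':ℝ)) = 2 ^ (j':ℝ) / 2 := by
    rw [← rpow_add two_pos, ← rpow_sub_one two_ne_zero]; ring_nf
  have hfar := two_rpow_add_lt_of_lt hα1 h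
  have hma : 0 ≤ m * (2:ℝ) ^ (α * (j:ℝ)) := mul_nonneg hm (by positivity)
  rw [← mul_lt_mul_iff_left₀ hd, hMd]
  unfold shellRadius at h₂
  rw [rpow_sub_one two_ne_zero (j':ℝ)] at h₂
  nlinarith

lemma natCast_lt_of_le_mjmax {α : ℝ} {j n : ℕ} (hn : (n:ℤ) ≤ mjmax α j) :
    (n:ℝ) < (2:ℝ) ^ ((1 - α) * (j:ℝ) - 1) + 1 :=
  lt_of_le_of_lt (by exact_mod_cast hn) (Int.ceil_lt_add_one _)

lemma Set.encard_le_of_forall_lt_add {S : Set ℕ} {n : ℕ} (h : ∀ a ∈ S, ∀ b ∈ S, a < b + n) :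
    S.encard ≤ n := by
  rcases S.eq_empty_or_nonempty with rfl | hS
  · simp
  have hsub : S ⊆ ↑(Finset.Ico (sInf S) (sInf S + n)) := fun a ha =>
    Finset.mem_coe.2 (Finset.mem_Ico.2 ⟨Nat.sInf_le ha, h a ha _ (Nat.sInf_mem hS)⟩)
  refine (Set.encard_le_encard hsub).trans_eq ?_
  rw [Set.encard_coe_eq_coe_finsetCard, Nat.card_Ico, Nat.add_sub_cancel_left]

theorem wavePacket_shift_relation_general (α β ε : ℝ)
    (hβ0 : 0 ≤ β) (hβα : β ≤ α) (hα1 : α ≤ 1) (hε : ε ∈ Set.Ioo (0:ℝ) (1/32))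
    (j m ℓ : ℕ) (j' : ℕ) :
    {m' : ℕ | ∃ ℓ' : ℕ, memI0 α β (j', m', ℓ') ∧
        (Qset α β ε j m ℓ ∩ Qset α β ε j' m' ℓ').Nonempty}.encard ≤ 5 := by
  refine Set.encard_le_of_forall_lt_add ?_
  rintro m₁ ⟨ℓ₁, ⟨-, hm₁, -⟩, p₁, hp₁, hq₁⟩ m₂ ⟨ℓ₂, -, p₂, hp₂, hq₂⟩
  have h₁ : shellRadius α j' (m₁ - 1/32) ≤ shellRadius α j (m + 9/4) :=
    (shellRadius_le_norm_of_mem_Qset hε.2 hq₁).trans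
      (norm_le_shellRadius_of_mem_Qset hβα hα1 hε.2 hp₁)
  have h₂ : shellRadius α j (m - 1/32) ≤ shellRadius α j' (m₂ + 9/4) :=
    (shellRadius_le_norm_of_mem_Qset hε.2 hp₂).trans
      (norm_le_shellRadius_of_mem_Qset hβα hα1 hε.2 hq₂)
  have : (m₁:ℝ) < m₂ + 5 := by
    rcases le_or_gt j j' with hjj' | hjj'
    · exact lt_add_five_of_shells_overlap (hβ0.trans hβα) hjj' h₁ h₂
    · linarith [natCast_lt_of_le_mjmax hm₁,
        two_rpow_lt_add_four_of_shells_overlap hα1 hjj' (Nat.cast_nonneg m) h₂]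
  exact_mod_cast this

/-- For every `(j,m,ℓ) ∈ I₀` and every `j' ∈ ℕ = {1,2,…}`, there are at
most five values of `m' ∈ ℕ₀` for which there is some `ℓ' ∈ ℕ₀` with
`(j',m',ℓ') ∈ I₀` and `Q_{j,m,ℓ} ∩ Q_{j',m',ℓ'} ≠ ∅`. -/
theorem wavePacket_shift_relation (α β ε : ℝ)
    (hβ0 : 0 ≤ β) (hβα : β ≤ α) (hα1 : α ≤ 1) (hε : ε ∈ Set.Ioo (0:ℝ) (1/32))
    (j m ℓ : ℕ) (hi : memI0 α β (j, m, ℓ)) (j' : ℕ) (hj' : 1 ≤ j') :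
    {m' : ℕ | ∃ ℓ' : ℕ, memI0 α β (j', m', ℓ') ∧
        (Qset α β ε j m ℓ ∩ Qset α β ε j' m' ℓ').Nonempty}.encard ≤ 5 :=
  wavePacket_shift_relation_general α β ε hβ0 hβα hα1 hε j m ℓ j'
end
end

section
/- Let 0 ≤ β ≤ α ≤ 1 and let (j,m,ℓ), (j',m',ℓ') ∈ I₀. If Q_{j,m,ℓ} ∩ Q_{j',m',ℓ'} ≠ ∅, then min over k ∈ {−2,−1,0,1,2} of |Θ_{j,ℓ} − Θ_{j',ℓ'} − 2πk| is at most 4·(1 + ε)·(2^{(β−1)j} + 2^{(β−1)j'}). -/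
noncomputable section

open Real Set MeasureTheory Pointwise
open scoped ENNReal

/-! Identify `ℝ²` with `ℂ`, so that `R_{j,ℓ}` becomes multiplication by `exp (i Θ_{j,ℓ})`.
A point `z` of `A_j Q + c_{j,m}` has `re z ≥ 2^j / 4` (as `2^{αj} ≤ 2^j`) and
`|im z| ≤ (1 + ε) 2^{βj}`, hence `|arg z| ≤ tan |arg z| = |im z| / re z ≤ 4 (1 + ε) 2^{(β-1)j}`.
A common point of two packets gives `Θ + arg z = Θ' + arg z' + 2πk`, and since
`Θ, Θ' ∈ [0, 2π + π/5]` while both arguments lie in `(-π/2, π/2)`, the integer `k` has `|k| ≤ 2`. -/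

theorem Complex.abs_arg_le_abs_im_div_re {z : ℂ} (hz : 0 < z.re) : |arg z| ≤ |z.im| / z.re := by
  have hlt : |arg z| < π / 2 := abs_arg_lt_pi_div_two_iff.2 (Or.inl hz)
  rcases le_total 0 (arg z) with h | h
  · rw [abs_of_nonneg h] at hlt ⊢
    calc arg z ≤ Real.tan (arg z) := Real.le_tan h hlt
      _ = z.im / z.re := tan_arg z
      _ ≤ |z.im| / z.re := by gcongr; exact le_abs_self _
  · rw [abs_of_nonpos h] at hlt ⊢
    calc -arg z ≤ Real.tan (-arg z) := Real.le_tan (neg_nonneg.2 h) hlt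
      _ = -z.im / z.re := by rw [Real.tan_neg, tan_arg, neg_div]
      _ ≤ |z.im| / z.re := by gcongr; exact neg_le_abs _

theorem Complex.exists_int_of_exp_mul_I_mul_eq {θ θ' : ℝ} {z z' : ℂ} (hz : z ≠ 0)
    (h : exp (θ * I) * z = exp (θ' * I) * z') :
    ∃ k : ℤ, θ + arg z - (θ' + arg z') = 2 * π * k := by
  have hz' : z' ≠ 0 := by
    rintro rfl
    simp [exp_ne_zero, hz] at h
  have hangle := congrArg (fun w : ℂ => (arg w : Real.Angle)) h
  simp only [arg_mul_coe_angle (exp_ne_zero _) hz, arg_mul_coe_angle (exp_ne_zero _) hz',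
    arg_exp_mul_I, Real.Angle.coe_toIocMod, ← Real.Angle.coe_add] at hangle
  exact Real.Angle.angle_eq_iff_two_pi_dvd_sub.1 hangle

theorem abs_le_two_of_two_pi_mul_eq {θ θ' φ φ' : ℝ} {k : ℤ}
    (hθ : θ ∈ Icc 0 (2 * π + π / 5)) (hθ' : θ' ∈ Icc 0 (2 * π + π / 5))
    (hφ : |φ| < π / 2) (hφ' : |φ'| < π / 2) (hk : θ + φ - (θ' + φ') = 2 * π * k) :
    |k| ≤ 2 := by
  obtain ⟨hφl, hφu⟩ := abs_lt.1 hφ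
  obtain ⟨hφl', hφu'⟩ := abs_lt.1 hφ'
  have hπ : 0 < 2 * π := by positivity
  have hupper : (k : ℝ) < 3 := by
    refine lt_of_mul_lt_mul_left ?_ hπ.le
    linarith [hθ.1, hθ.2, hθ'.1, hθ'.2]
  have hlower : (-3 : ℝ) < k := by
    refine lt_of_mul_lt_mul_left ?_ hπ.le
    linarith [hθ.1, hθ.2, hθ'.1, hθ'.2]
  have : -3 < k ∧ k < 3 := ⟨by exact_mod_cast hlower, by exact_mod_cast hupper⟩
  rw [abs_le]
  omega

def toComplex (x : R2) : ℂ := ⟨x 0, x 1⟩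

theorem toComplex_mulV_Rmat (θ : ℝ) (x : R2) :
    toComplex (mulV (Rmat θ) x) = Complex.exp (θ * Complex.I) * toComplex x := by
  apply Complex.ext
  · simp [toComplex, mulV, Rmat, dotProduct, Fin.sum_univ_two, Complex.exp_ofReal_mul_I_re,
      Complex.exp_ofReal_mul_I_im, sub_eq_add_neg]
  · simp [toComplex, mulV, Rmat, dotProduct, Fin.sum_univ_two, Complex.exp_ofReal_mul_I_re,
      Complex.exp_ofReal_mul_I_im]
    ring

theorem toComplex_mulV_Amat_add_cvec (α β : ℝ) (j m : ℕ) (q : R2) :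
    toComplex (mulV (Amat α β j) q + cvec α j m) =
      ⟨(2:ℝ) ^ (α * (j:ℝ)) * q 0 + ((2:ℝ) ^ ((j:ℝ) - 1) + m * (2:ℝ) ^ (α * (j:ℝ))),
        (2:ℝ) ^ (β * (j:ℝ)) * q 1⟩ := by
  apply Complex.ext <;>
    simp [toComplex, mulV, Amat, cvec, vec2, dotProduct, Fin.sum_univ_two]

theorem Theta_mem_Icc {β : ℝ} (hβ : β ≤ 1) {j ℓ : ℕ} (hℓ : (ℓ : ℤ) ≤ ljmax β j) :
    Theta β j ℓ ∈ Icc 0 (2 * π + π / 5) := by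
  set t : ℝ := (2:ℝ) ^ ((β - 1) * (j:ℝ))
  have ht0 : 0 < t := by positivity
  have ht1 : t ≤ 1 := Real.rpow_le_one_of_one_le_of_nonpos one_le_two
    (mul_nonpos_of_nonpos_of_nonneg (by linarith) j.cast_nonneg)
  have hst : (2:ℝ) ^ ((1 - β) * (j:ℝ)) * t = 1 := by
    rw [← Real.rpow_add two_pos]
    norm_num [show (1 - β) * (j:ℝ) + (β - 1) * j = 0 by ring]
  have hℓ' : (ℓ : ℝ) < 10 * (2:ℝ) ^ ((1 - β) * (j:ℝ)) + 1 := by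
    have : ((ℓ : ℤ) : ℝ) ≤ ljmax β j := by exact_mod_cast hℓ
    have := Int.ceil_lt_add_one (10 * (2:ℝ) ^ ((1 - β) * (j:ℝ)))
    rw [ljmax] at *
    push_cast at *
    linarith
  have hℓt : (ℓ : ℝ) * t ≤ 10 + t := by nlinarith
  refine ⟨by unfold Theta; positivity, ?_⟩
  calc Theta β j ℓ = π / 5 * (ℓ * t) := by unfold Theta; ring
    _ ≤ π / 5 * (10 + 1) := by gcongr; linarith
    _ = 2 * π + π / 5 := by ring

theorem quarter_two_rpow_le_re {α ε : ℝ} (hα : α ≤ 1) (hε : ε ≤ 1 / 4)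
    (j m : ℕ) {q0 : ℝ} (hq0 : -ε < q0) :
    (2:ℝ) ^ (j:ℝ) / 4 ≤
      (2:ℝ) ^ (α * (j:ℝ)) * q0 + ((2:ℝ) ^ ((j:ℝ) - 1) + m * (2:ℝ) ^ (α * (j:ℝ))) := by
  have ha : (2:ℝ) ^ (α * (j:ℝ)) ≤ (2:ℝ) ^ (j:ℝ) :=
    Real.rpow_le_rpow_of_exponent_le one_le_two (by nlinarith [j.cast_nonneg (α := ℝ)])
  have hhalf : (2:ℝ) ^ ((j:ℝ) - 1) = (2:ℝ) ^ (j:ℝ) / 2 := by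
    rw [Real.rpow_sub two_pos, Real.rpow_one]
  have ha0 : 0 < (2:ℝ) ^ (α * (j:ℝ)) := by positivity
  have hm : 0 ≤ (m : ℝ) * (2:ℝ) ^ (α * (j:ℝ)) := by positivity
  rcases le_total 0 ε with hε0 | hε0 <;> nlinarith

theorem exists_toComplex_eq_exp_mul_of_mem_Qset {α β ε : ℝ} (hα : α ≤ 1) (hε : ε ≤ 1 / 4)
    {j m ℓ : ℕ} {x : R2} (hx : x ∈ Qset α β ε j m ℓ) :
    ∃ z : ℂ, toComplex x = Complex.exp (Theta β j ℓ * Complex.I) * z ∧ 0 < z.re ∧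
      |z.arg| ≤ 4 * (1 + ε) * (2:ℝ) ^ ((β - 1) * (j:ℝ)) := by
  obtain ⟨q, ⟨⟨hq0, -⟩, hq1l, hq1u⟩, rfl⟩ := hx
  refine ⟨_, toComplex_mulV_Rmat _ _, ?_⟩
  rw [toComplex_mulV_Amat_add_cvec]
  have hre := quarter_two_rpow_le_re hα hε j m hq0
  have hre0 : 0 < (2:ℝ) ^ (j:ℝ) / 4 := by positivity
  refine ⟨hre0.trans_le hre, (Complex.abs_arg_le_abs_im_div_re (hre0.trans_le hre)).trans ?_⟩
  have him : |(2:ℝ) ^ (β * (j:ℝ)) * q 1| ≤ (1 + ε) * (2:ℝ) ^ (β * (j:ℝ)) := by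
    rw [abs_mul, abs_of_pos (by positivity), mul_comm]
    gcongr
    exact abs_le.2 ⟨by linarith, hq1u.le⟩
  calc |(2:ℝ) ^ (β * (j:ℝ)) * q 1| / _
        ≤ (1 + ε) * (2:ℝ) ^ (β * (j:ℝ)) / ((2:ℝ) ^ (j:ℝ) / 4) := by
        gcongr
        exact (abs_nonneg _).trans him
    _ = 4 * (1 + ε) * (2:ℝ) ^ ((β - 1) * (j:ℝ)) := by
        rw [sub_mul, one_mul, Real.rpow_sub two_pos]
        field_simp

theorem wavePacket_angle_relation_general (α β ε : ℝ)
    (hβα : β ≤ α) (hα1 : α ≤ 1) (hε : ε ∈ Set.Ioo (0:ℝ) (1/32))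
    (j m ℓ j' m' ℓ' : ℕ) (hi : memI0 α β (j, m, ℓ)) (hi' : memI0 α β (j', m', ℓ'))
    (h : (Qset α β ε j m ℓ ∩ Qset α β ε j' m' ℓ').Nonempty) :
    ∃ k : ℤ, |k| ≤ 2 ∧
      |Theta β j ℓ - Theta β j' ℓ' - 2 * Real.pi * (k:ℝ)|
        ≤ 4 * (1 + ε) * ((2:ℝ) ^ ((β - 1) * (j:ℝ)) + (2:ℝ) ^ ((β - 1) * (j':ℝ))) := by
  have hε' : ε ≤ 1 / 4 := by linarith [hε.2]
  obtain ⟨x, hx, hx'⟩ := h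
  obtain ⟨z, hxz, hz0, hz⟩ := exists_toComplex_eq_exp_mul_of_mem_Qset hα1 hε' hx
  obtain ⟨z', hxz', hz0', hz'⟩ := exists_toComplex_eq_exp_mul_of_mem_Qset hα1 hε' hx'
  obtain ⟨k, hk⟩ := Complex.exists_int_of_exp_mul_I_mul_eq
    (fun h0 => by simp [h0] at hz0) (hxz.symm.trans hxz')
  refine ⟨k, abs_le_two_of_two_pi_mul_eq (Theta_mem_Icc (hβα.trans hα1) hi.2.2)
    (Theta_mem_Icc (hβα.trans hα1) hi'.2.2) (Complex.abs_arg_lt_pi_div_two_iff.2 (.inl hz0))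
    (Complex.abs_arg_lt_pi_div_two_iff.2 (.inl hz0')) hk, ?_⟩
  calc |Theta β j ℓ - Theta β j' ℓ' - 2 * π * k| = |z'.arg - z.arg| :=
        congrArg _ (by linarith)
    _ ≤ |z'.arg| + |z.arg| := abs_sub _ _
    _ ≤ _ := by linarith

/-- If `(j,m,ℓ), (j',m',ℓ') ∈ I₀` and `Q_{j,m,ℓ} ∩ Q_{j',m',ℓ'} ≠ ∅`,
then `min_{k ∈ {−2,…,2}} |Θ_{j,ℓ} − Θ_{j',ℓ'} − 2πk| ≤ 4(1+ε)(2^{(β−1)j} + 2^{(β−1)j'})`. -/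
theorem wavePacket_angle_relation (α β ε : ℝ)
    (hβ0 : 0 ≤ β) (hβα : β ≤ α) (hα1 : α ≤ 1) (hε : ε ∈ Set.Ioo (0:ℝ) (1/32))
    (j m ℓ j' m' ℓ' : ℕ) (hi : memI0 α β (j, m, ℓ)) (hi' : memI0 α β (j', m', ℓ'))
    (h : (Qset α β ε j m ℓ ∩ Qset α β ε j' m' ℓ').Nonempty) :
    ∃ k : ℤ, |k| ≤ 2 ∧
      |Theta β j ℓ - Theta β j' ℓ' - 2 * Real.pi * (k:ℝ)|
        ≤ 4 * (1 + ε) * ((2:ℝ) ^ ((β - 1) * (j:ℝ)) + (2:ℝ) ^ ((β - 1) * (j':ℝ))) :=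
  wavePacket_angle_relation_general α β ε hβα hα1 hε j m ℓ j' m' ℓ' hi hi' h
end
end

section
/- Let 0 ≤ β ≤ α ≤ 1 and 0 ≤ β' ≤ α' ≤ 1, and consider the wave packet coverings Q^(α,β) and Q^(α',β') (built with the same N = 10 and with parameters ε, ε' ∈ (0,1/32) respectively). For all (j,m,ℓ) ∈ I₀^(α,β) and (j',m',ℓ') ∈ I₀^(α',β'): if Q_{j,m,ℓ}^(α,β) ∩ Q_{j',m',ℓ'}^(α',β') ≠ ∅, then |j − j'| ≤ 4. -/
noncomputable section

open Real Set MeasureTheory Pointwise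
open scoped ENNReal

/-! Every set `Q_{j,m,ℓ}` lies in the annulus `2^j/4 ≤ ‖y‖ ≤ 4·2^j`, whatever `α, β ≤ 1`.
Indeed the rotation preserves the norm, and for `x ∈ Q` the point `A_j x + c_{j,m}` has first
coordinate between `2^{j-1} − 2^j/32` and `(3 + 1/32)·2^j` (as `m·2^{αj} ≤ 2^{j-1} + 2^{αj}`)
and second coordinate at most `(1 + 1/32)·2^j` in absolute value. Annuli of scales `j`, `j'`
with `|j − j'| ≥ 5` are disjoint. -/

namespace WavePacket

lemma mulV_apply_zero (M : Matrix (Fin 2) (Fin 2) ℝ) (x : R2) :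
    mulV M x 0 = M 0 0 * x 0 + M 0 1 * x 1 := by
  simp [mulV]

lemma mulV_apply_one (M : Matrix (Fin 2) (Fin 2) ℝ) (x : R2) :
    mulV M x 1 = M 1 0 * x 0 + M 1 1 * x 1 := by
  simp [mulV]

lemma norm_sq_eq (v : R2) : ‖v‖ ^ 2 = v 0 ^ 2 + v 1 ^ 2 := by
  simp [EuclideanSpace.real_norm_sq_eq, Fin.sum_univ_two]

lemma norm_mulV_Rmat (θ : ℝ) (v : R2) : ‖mulV (Rmat θ) v‖ = ‖v‖ := by
  rw [← sq_eq_sq₀ (norm_nonneg _) (norm_nonneg _), norm_sq_eq, norm_sq_eq,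
    mulV_apply_zero, mulV_apply_one]
  simp only [Rmat, Matrix.of_apply, Matrix.cons_val', Matrix.cons_val_zero, Matrix.cons_val_one,
    Matrix.cons_val_fin_one]
  linear_combination (v 0 ^ 2 + v 1 ^ 2) * Real.sin_sq_add_cos_sq θ

lemma norm_le_of_abs_apply_le {v : R2} {a b r : ℝ} (hr : 0 ≤ r) (h0 : |v 0| ≤ a)
    (h1 : |v 1| ≤ b) (hab : a ^ 2 + b ^ 2 ≤ r ^ 2) : ‖v‖ ≤ r := by
  refine pow_le_pow_iff_left₀ (norm_nonneg v) hr two_ne_zero |>.mp ?_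
  rw [norm_sq_eq, ← sq_abs (v 0), ← sq_abs (v 1)]
  nlinarith [abs_nonneg (v 0), abs_nonneg (v 1)]

lemma two_rpow_mul_le_two_pow {γ : ℝ} (hγ : γ ≤ 1) (j : ℕ) :
    (2 : ℝ) ^ (γ * j) ≤ 2 ^ j := by
  rw [← Real.rpow_natCast]
  exact Real.rpow_le_rpow_of_exponent_le one_le_two
    (mul_le_of_le_one_left (Nat.cast_nonneg j) hγ)

lemma natCast_mul_two_rpow_le {α : ℝ} {j m : ℕ} (hm : (m : ℤ) ≤ mjmax α j) :
    m * (2 : ℝ) ^ (α * j) ≤ 2 ^ ((j : ℝ) - 1) + 2 ^ (α * j) := by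
  have hm' : (m : ℝ) ≤ 2 ^ ((1 - α) * j - 1) + 1 :=
    (Int.cast_le.mpr hm).trans (Int.ceil_lt_add_one _).le |>.trans_eq' (by simp)
  calc m * (2 : ℝ) ^ (α * j) ≤ (2 ^ ((1 - α) * j - 1) + 1) * 2 ^ (α * j) :=
        mul_le_mul_of_nonneg_right hm' (by positivity)
    _ = 2 ^ ((j : ℝ) - 1) + 2 ^ (α * j) := by
        rw [add_mul, one_mul, ← Real.rpow_add two_pos]; ring_nf

lemma affine_apply_zero (α β : ℝ) (j m : ℕ) (x : R2) :
    (mulV (Amat α β j) x + cvec α j m) 0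
      = 2 ^ (α * j) * x 0 + (2 ^ ((j : ℝ) - 1) + m * 2 ^ (α * j)) := by
  simp [mulV_apply_zero, Amat, cvec, vec2]

lemma affine_apply_one (α β : ℝ) (j m : ℕ) (x : R2) :
    (mulV (Amat α β j) x + cvec α j m) 1 = 2 ^ (β * j) * x 1 := by
  simp [mulV_apply_one, Amat, cvec, vec2]

lemma norm_mem_Icc_of_mem_Qset {α β ε : ℝ} (hβ : β ≤ 1) (hα : α ≤ 1) (hε : ε ≤ 1 / 32)
    {j m ℓ : ℕ} (hm : (m : ℤ) ≤ mjmax α j) {y : R2} (hy : y ∈ Qset α β ε j m ℓ) :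
    ‖y‖ ∈ Icc ((2 : ℝ) ^ j / 4) (4 * 2 ^ j) := by
  obtain ⟨x, ⟨⟨hx0l, hx0u⟩, ⟨hx1l, hx1u⟩⟩, rfl⟩ := hy
  rw [norm_mulV_Rmat]
  set w := mulV (Amat α β j) x + cvec α j m
  set T : ℝ := 2 ^ j
  have hT : 0 < T := by positivity
  have hE : (2 : ℝ) ^ (α * j) ≤ T := two_rpow_mul_le_two_pow hα j
  have hF : (2 : ℝ) ^ (β * j) ≤ T := two_rpow_mul_le_two_pow hβ j
  have hP : (2 : ℝ) ^ ((j : ℝ) - 1) = T / 2 := by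
    rw [Real.rpow_sub two_pos, Real.rpow_one, Real.rpow_natCast]
  have hmE := natCast_mul_two_rpow_le hm
  have hE0 : 0 < (2 : ℝ) ^ (α * j) := by positivity
  have hF0 : 0 < (2 : ℝ) ^ (β * j) := by positivity
  have hmE0 : 0 ≤ m * (2 : ℝ) ^ (α * j) := by positivity
  have hw0 : w 0 = 2 ^ (α * j) * x 0 + (2 ^ ((j : ℝ) - 1) + m * 2 ^ (α * j)) :=
    affine_apply_zero α β j m x
  have hw1 : w 1 = 2 ^ (β * j) * x 1 := affine_apply_one α β j m x
  have hw0_lower : T / 4 ≤ w 0 := by nlinarith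
  have hw0_upper : w 0 ≤ (3 + 1 / 32) * T := by nlinarith
  have hw1_abs : |w 1| ≤ (1 + 1 / 32) * T := by
    rw [hw1, abs_le]; constructor <;> nlinarith
  constructor
  · exact hw0_lower.trans ((le_abs_self _).trans (PiLp.norm_apply_le w 0))
  · exact norm_le_of_abs_apply_le (by positivity) (abs_le.mpr ⟨by linarith, hw0_upper⟩)
      hw1_abs (by nlinarith)

lemma le_add_four_of_two_pow_div_four_le {a b : ℕ} (h : (2 : ℝ) ^ a / 4 ≤ 4 * 2 ^ b) :
    a ≤ b + 4 :=
  (pow_le_pow_iff_right₀ (one_lt_two (α := ℝ))).mp (by rw [pow_add]; linarith)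

end WavePacket

open WavePacket in
theorem wavePacket_two_coverings_scale_relation_general (α β ε α' β' ε' : ℝ)
    (hβα : β ≤ α) (hα1 : α ≤ 1)
    (hβα' : β' ≤ α') (hα1' : α' ≤ 1)
    (hε : ε ∈ Set.Ioo (0:ℝ) (1/32)) (hε' : ε' ∈ Set.Ioo (0:ℝ) (1/32))
    (j m ℓ j' m' ℓ' : ℕ) (hi : memI0 α β (j, m, ℓ)) (hi' : memI0 α' β' (j', m', ℓ'))
    (h : (Qset α β ε j m ℓ ∩ Qset α' β' ε' j' m' ℓ').Nonempty) :
    |(j : ℤ) - (j' : ℤ)| ≤ 4 := by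
  obtain ⟨y, hy, hy'⟩ := h
  obtain ⟨hlow, hupp⟩ :=
    norm_mem_Icc_of_mem_Qset (hβα.trans hα1) hα1 hε.2.le hi.2.1 hy
  obtain ⟨hlow', hupp'⟩ :=
    norm_mem_Icc_of_mem_Qset (hβα'.trans hα1') hα1' hε'.2.le hi'.2.1 hy'
  have hjj' := le_add_four_of_two_pow_div_four_le (hlow.trans hupp')
  have hj'j := le_add_four_of_two_pow_div_four_le (hlow'.trans hupp)
  rw [abs_le]
  omega

/-- Let `0 ≤ β ≤ α ≤ 1` and `0 ≤ β' ≤ α' ≤ 1`, and consider the wave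
packet coverings `Q^{(α,β)}` and `Q^{(α',β')}` (built with `N = 10` and parameters
`ε, ε' ∈ (0,1/32)` respectively). If `(j,m,ℓ) ∈ I₀^{(α,β)}`, `(j',m',ℓ') ∈ I₀^{(α',β')}`
and `Q_{j,m,ℓ}^{(α,β)} ∩ Q_{j',m',ℓ'}^{(α',β')} ≠ ∅`, then `|j − j'| ≤ 4`. -/
theorem wavePacket_two_coverings_scale_relation (α β ε α' β' ε' : ℝ)
    (hβ0 : 0 ≤ β) (hβα : β ≤ α) (hα1 : α ≤ 1)
    (hβ0' : 0 ≤ β') (hβα' : β' ≤ α') (hα1' : α' ≤ 1)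
    (hε : ε ∈ Set.Ioo (0:ℝ) (1/32)) (hε' : ε' ∈ Set.Ioo (0:ℝ) (1/32))
    (j m ℓ j' m' ℓ' : ℕ) (hi : memI0 α β (j, m, ℓ)) (hi' : memI0 α' β' (j', m', ℓ'))
    (h : (Qset α β ε j m ℓ ∩ Qset α' β' ε' j' m' ℓ').Nonempty) :
    |(j : ℤ) - (j' : ℤ)| ≤ 4 :=
  wavePacket_two_coverings_scale_relation_general α β ε α' β' ε' hβα hα1 hβα' hα1' hε hε' j m ℓ j'
    m' ℓ' hi hi' h
end
end

section
/- Let α, β ∈ [0,1] and let (Q_i)_{i∈I} be an (α,β) covering of ℝ². Then there exists a constant C' ≥ 1, depending only on the constants in the definition of the covering, such that for every i ∈ I and all ξ, η ∈ Q_i one has (1/C')·(1 + |η|) ≤ 1 + |ξ| ≤ C'·(1 + |η|). -/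
noncomputable section

open Real Set MeasureTheory Pointwise
open scoped ENNReal

/-- A family `(Q i)_{i ∈ ι}` of subsets of `ℝ²` is an `(α,β)` covering of `ℝ²` if its
members are open and bounded and:
(1) it is an admissible covering of `ℝ²` (it covers `ℝ²` and the number of its members
that intersect any one of its members is uniformly bounded);
(2) `λ(Q i) ≍ (1+|ξ|)^{α+β}` for all `i` and `ξ ∈ Q i`, with `λ` Lebesgue measure;
(3) for each `i` there is an interval `L_i ⊆ [0,∞)` with `λ(L_i) ≤ C₁·(1+|ξ|)^α` and
`|ξ| ∈ L_i` for all `ξ ∈ Q i`;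
(4) for each `i` there is an angle `φ_i ∈ ℝ` such that every `ξ ∈ Q i` can be written
as `ξ = |ξ|·(cos φ, sin φ)` with `min_{ω ∈ {0,π}} |φ − (φ_i + ω)| ≤ C₂·(1+|ξ|)^{β−1}`;
with all constants independent of `i` and `ξ`. -/
structure IsABCovering (α β : ℝ) {ι : Type*} (Q : ι → Set R2) : Prop where
  isOpen : ∀ i, IsOpen (Q i)
  isBounded : ∀ i, Bornology.IsBounded (Q i)
  covers : (⋃ i, Q i) = (Set.univ : Set R2)
  admissible : ∃ K : ℕ, ∀ i, {l : ι | (Q l ∩ Q i).Nonempty}.encard ≤ K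
  measure_bounds : ∃ c C : ℝ, 0 < c ∧ c ≤ C ∧ ∀ i, ∀ ξ ∈ Q i,
    ENNReal.ofReal (c * (1 + ‖ξ‖) ^ (α + β)) ≤ MeasureTheory.volume (Q i) ∧
    MeasureTheory.volume (Q i) ≤ ENNReal.ofReal (C * (1 + ‖ξ‖) ^ (α + β))
  radial : ∃ C₁ : ℝ, 0 < C₁ ∧ ∀ i, ∃ L : Set ℝ, L ⊆ Set.Ici (0:ℝ) ∧ L.OrdConnected ∧
    ∀ ξ ∈ Q i, MeasureTheory.volume L ≤ ENNReal.ofReal (C₁ * (1 + ‖ξ‖) ^ α) ∧ ‖ξ‖ ∈ L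
  angular : ∃ C₂ : ℝ, 0 < C₂ ∧ ∀ i, ∃ φi : ℝ, ∀ ξ ∈ Q i, ∃ φ : ℝ,
    ξ = ‖ξ‖ • vec2 (Real.cos φ) (Real.sin φ) ∧
    min |φ - φi| |φ - (φi + Real.pi)| ≤ C₂ * (1 + ‖ξ‖) ^ (β - 1)

/-! For `ξ, η` in one member `Q i`, both radii `‖ξ‖, ‖η‖` lie in the interval `L_i`, so
`‖ξ‖ - ‖η‖ ≤ λ(L_i) ≤ C₁ (1 + ‖η‖)^α ≤ C₁ (1 + ‖η‖)` because `α ≤ 1`; hence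
`1 + ‖ξ‖ ≤ (1 + C₁)(1 + ‖η‖)`, and symmetrically. -/

theorem Set.OrdConnected.sub_le_of_volume_le {L : Set ℝ} (hL : L.OrdConnected) {a b r : ℝ}
    (ha : a ∈ L) (hb : b ∈ L) (hr : 0 ≤ r) (hvol : volume L ≤ ENNReal.ofReal r) :
    b - a ≤ r := by
  have hIcc : volume (Icc a b) ≤ ENNReal.ofReal r := (measure_mono (hL.out ha hb)).trans hvol
  rwa [Real.volume_Icc, ENNReal.ofReal_le_ofReal_iff hr] at hIcc

namespace IsABCovering

variable {α β : ℝ} {ι : Type*} {Q : ι → Set R2}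

theorem norm_sub_le_rpow (hQ : IsABCovering α β Q) :
    ∃ C₁ : ℝ, 0 < C₁ ∧ ∀ i, ∀ ξ ∈ Q i, ∀ η ∈ Q i, ‖ξ‖ - ‖η‖ ≤ C₁ * (1 + ‖η‖) ^ α := by
  obtain ⟨C₁, hC₁, hrad⟩ := hQ.radial
  refine ⟨C₁, hC₁, fun i ξ hξ η hη => ?_⟩
  obtain ⟨L, -, hLconn, hL⟩ := hrad i
  obtain ⟨hvol, hηL⟩ := hL η hη
  exact hLconn.sub_le_of_volume_le hηL (hL ξ hξ).2 (by positivity) hvol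

theorem one_add_norm_le (hQ : IsABCovering α β Q) (hα : α ≤ 1) :
    ∃ C : ℝ, 1 ≤ C ∧ ∀ i, ∀ ξ ∈ Q i, ∀ η ∈ Q i, 1 + ‖ξ‖ ≤ C * (1 + ‖η‖) := by
  obtain ⟨C₁, hC₁, hsub⟩ := hQ.norm_sub_le_rpow
  refine ⟨1 + C₁, by linarith, fun i ξ hξ η hη => ?_⟩
  have h_one_le : 1 ≤ 1 + ‖η‖ := le_add_of_nonneg_right (norm_nonneg η)
  calc 1 + ‖ξ‖ ≤ 1 + ‖η‖ + C₁ * (1 + ‖η‖) ^ α := by linarith [hsub i ξ hξ η hη]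
    _ ≤ 1 + ‖η‖ + C₁ * (1 + ‖η‖) := by gcongr; exact Real.rpow_le_self_of_one_le h_one_le hα
    _ = (1 + C₁) * (1 + ‖η‖) := by ring

end IsABCovering

theorem abCovering_norm_equivalence_general (α β : ℝ)
    (hα : α ∈ Set.Icc (0:ℝ) 1)
    {ι : Type*} (Q : ι → Set R2) (hQ : IsABCovering α β Q) :
    ∃ C' : ℝ, 1 ≤ C' ∧ ∀ i : ι, ∀ ξ ∈ Q i, ∀ η ∈ Q i,
      (1 / C') * (1 + ‖η‖) ≤ 1 + ‖ξ‖ ∧ 1 + ‖ξ‖ ≤ C' * (1 + ‖η‖) := by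
  obtain ⟨C, hC, hle⟩ := hQ.one_add_norm_le hα.2
  refine ⟨C, hC, fun i ξ hξ η hη => ⟨?_, hle i ξ hξ η hη⟩⟩
  rw [one_div_mul_eq_div, div_le_iff₀ (by positivity), mul_comm]
  exact hle i η hη ξ hξ

/-- On any `(α,β)` covering of `ℝ²`, the quantity `1 + |ξ|` is uniformly
comparable for points of the same member: there is `C' ≥ 1` such that for every `i`
and all `ξ, η ∈ Q i`, `(1/C')·(1 + |η|) ≤ 1 + |ξ| ≤ C'·(1 + |η|)`. -/
theorem abCovering_norm_equivalence (α β : ℝ)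
    (hα : α ∈ Set.Icc (0:ℝ) 1) (hβ : β ∈ Set.Icc (0:ℝ) 1)
    {ι : Type*} (Q : ι → Set R2) (hQ : IsABCovering α β Q) :
    ∃ C' : ℝ, 1 ≤ C' ∧ ∀ i : ι, ∀ ξ ∈ Q i, ∀ η ∈ Q i,
      (1 / C') * (1 + ‖η‖) ≤ 1 + ‖ξ‖ ∧ 1 + ‖ξ‖ ≤ C' * (1 + ‖η‖) :=
  abCovering_norm_equivalence_general α β hα Q hQ
end
end

section
/- Let B be an invertible 2×2 real matrix and let φ₀ ∈ ℝ. Then there exists an angle ψ₀ ∈ ℝ with the following property: for every r ≥ 0 and φ ∈ ℝ there exist r' ≥ 0 and φ' ∈ ℝ such that B·(r·(cos φ, sin φ)) = r'·(cos φ', sin φ') and min over ω ∈ {0, π} of |φ' − (ψ₀ + ω)| is at most (π/2)·‖B^{−1}‖²·|det B|·(min over θ ∈ {0, π} of |φ − (φ₀ + θ)|), where ‖·‖ denotes the operator norm induced by the Euclidean norm on ℝ². -/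
noncomputable section

open Real Set MeasureTheory Pointwise
open scoped ENNReal

/-!
Write `B (cos φ, sin φ) = m (cos ψ, sin ψ)` with `m = ‖B (cos φ, sin φ)‖`. Since
`1 = ‖B⁻¹ B u‖ ≤ ‖B⁻¹‖ m` for a unit vector `u`, every stretch factor is at least `1 / ‖B⁻¹‖`,
and comparing the oriented areas spanned by the images of two unit vectors gives
`m₀ m sin (ψ - ψ₀) = det B · sin (φ - φ₀)`. Hence
`|sin (ψ - ψ₀)| ≤ ‖B⁻¹‖² |det B| |sin (φ - φ₀)|`. Finally `|sin x| ≤ |x|` on the right, and on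
the left Jordan's inequality `|x| ≤ (π/2) |sin x|` for `|x| ≤ π/2`, after reducing `ψ` modulo
`2π` into `(ψ₀ - π/2, ψ₀ + 3π/2]`, where it lies within `π/2` of `ψ₀` or of `ψ₀ + π`.
-/

theorem abs_sin_sub_le_min_abs_sub (x a : ℝ) :
    |sin (x - a)| ≤ min |x - a| |x - (a + π)| := by
  refine le_min abs_sin_le_abs ?_
  calc |sin (x - a)| = |sin (x - (a + π))| := by
        rw [show x - (a + π) = x - a - π by ring, sin_sub_pi, abs_neg]
    _ ≤ |x - (a + π)| := abs_sin_le_abs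

theorem abs_le_pi_div_two_mul_abs_sin {x : ℝ} (hx : |x| ≤ π / 2) : |x| ≤ π / 2 * |sin x| := by
  have := mul_abs_le_abs_sin hx
  rw [div_mul_eq_mul_div, div_le_iff₀ pi_pos] at this
  linarith

theorem min_abs_sub_le_pi_div_two_mul_abs_sin {x a : ℝ} (hx : x ∈ Ioc (a - π / 2) (a + 3 * π / 2)) :
    min |x - a| |x - (a + π)| ≤ π / 2 * |sin (x - a)| := by
  obtain ⟨hlo, hhi⟩ := hx
  rcases le_or_gt x (a + π / 2) with hx | hx
  · exact (min_le_left _ _).trans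
      (abs_le_pi_div_two_mul_abs_sin (abs_le.2 ⟨by linarith, by linarith⟩))
  · calc min |x - a| |x - (a + π)| ≤ |x - (a + π)| := min_le_right _ _
      _ ≤ π / 2 * |sin (x - (a + π))| :=
          abs_le_pi_div_two_mul_abs_sin (abs_le.2 ⟨by linarith, by linarith⟩)
      _ = π / 2 * |sin (x - a)| := by
          rw [show x - (a + π) = x - a - π by ring, sin_sub_pi, abs_neg]

theorem exists_cos_sin_eq_min_abs_sub_le (ψ a : ℝ) :
    ∃ x, cos x = cos ψ ∧ sin x = sin ψ ∧ min |x - a| |x - (a + π)| ≤ π / 2 * |sin (ψ - a)| := by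
  set x := toIocMod two_pi_pos (a - π / 2) ψ
  have hx : x = ψ - toIocDiv two_pi_pos (a - π / 2) ψ • (2 * π) := by
    rw [← self_sub_toIocMod]; ring
  have hsin : sin (x - a) = sin (ψ - a) := by
    rw [hx, sub_right_comm]; exact sin_periodic.sub_zsmul_eq _
  refine ⟨x, by rw [hx]; exact cos_periodic.sub_zsmul_eq _,
    by rw [hx]; exact sin_periodic.sub_zsmul_eq _, hsin ▸ ?_⟩
  obtain ⟨hlo, hhi⟩ := toIocMod_mem_Ioc two_pi_pos (a - π / 2) ψ
  exact min_abs_sub_le_pi_div_two_mul_abs_sin ⟨hlo, by linarith⟩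

theorem mulV_eq_toEuclideanCLM (M : Matrix (Fin 2) (Fin 2) ℝ) (x : R2) :
    mulV M x = Matrix.toEuclideanCLM (𝕜 := ℝ) M x := rfl

theorem mulV_smul (M : Matrix (Fin 2) (Fin 2) ℝ) (r : ℝ) (x : R2) :
    mulV M (r • x) = r • mulV M x := by
  simp only [mulV_eq_toEuclideanCLM, map_smul]

theorem norm_le_norm_inv_mul_norm_mulV {B : Matrix (Fin 2) (Fin 2) ℝ} (hB : IsUnit B.det) (x : R2) :
    ‖x‖ ≤ ‖Matrix.toEuclideanCLM (𝕜 := ℝ) B⁻¹‖ * ‖mulV B x‖ := by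
  have : Matrix.toEuclideanCLM (𝕜 := ℝ) B⁻¹ (mulV B x) = x := by
    rw [mulV_eq_toEuclideanCLM, ← mul_apply_eq_comp, ← map_mul,
      Matrix.nonsing_inv_mul B hB, map_one, one_apply_eq_self]
  simpa only [this] using (Matrix.toEuclideanCLM (𝕜 := ℝ) B⁻¹).le_opNorm (mulV B x)

theorem norm_vec2_cos_sin (θ : ℝ) : ‖vec2 (cos θ) (sin θ)‖ = 1 := by
  simp [vec2, EuclideanSpace.norm_eq, Fin.sum_univ_two]

theorem exists_eq_smul_vec2_cos_sin (v : R2) :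
    ∃ m θ : ℝ, 0 ≤ m ∧ v = m • vec2 (cos θ) (sin θ) := by
  set z : ℂ := ⟨v 0, v 1⟩
  have hz : ‖z‖ = ‖v‖ := by
    rw [EuclideanSpace.norm_eq, Complex.norm_def, Complex.normSq_mk, Fin.sum_univ_two]
    simp only [Real.norm_eq_abs, sq, abs_mul_abs_self]
  refine ⟨‖v‖, z.arg, norm_nonneg v, ?_⟩
  ext i
  fin_cases i
  · simp [vec2, ← hz, Complex.norm_mul_cos_arg, z]
  · simp [vec2, ← hz, Complex.norm_mul_sin_arg, z]

def cross (v w : R2) : ℝ := v 0 * w 1 - v 1 * w 0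

theorem cross_mulV (M : Matrix (Fin 2) (Fin 2) ℝ) (v w : R2) :
    cross (mulV M v) (mulV M w) = M.det * cross v w := by
  simp only [cross, mulV, Matrix.mulVec_fin_two, PiLp.continuousLinearEquiv_apply,
    PiLp.continuousLinearEquiv_symm_apply, Matrix.cons_val_zero, Matrix.cons_val_one,
    Matrix.det_fin_two]
  ring

theorem cross_smul_vec2_cos_sin (r s a b : ℝ) :
    cross (r • vec2 (cos a) (sin a)) (s • vec2 (cos b) (sin b)) = r * s * sin (b - a) := by
  simp only [cross, vec2, PiLp.continuousLinearEquiv_symm_apply, PiLp.smul_apply,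
    Matrix.cons_val_zero, Matrix.cons_val_one, smul_eq_mul, sin_sub]
  ring

theorem abs_sin_sub_le_of_mulV_eq {B : Matrix (Fin 2) (Fin 2) ℝ} (hB : IsUnit B.det)
    {φ₀ φ ψ₀ ψ m₀ m : ℝ} (hm₀ : 0 ≤ m₀) (hm : 0 ≤ m)
    (h₀ : mulV B (vec2 (cos φ₀) (sin φ₀)) = m₀ • vec2 (cos ψ₀) (sin ψ₀))
    (h : mulV B (vec2 (cos φ) (sin φ)) = m • vec2 (cos ψ) (sin ψ)) :
    |sin (ψ - ψ₀)| ≤ ‖Matrix.toEuclideanCLM (𝕜 := ℝ) B⁻¹‖ ^ 2 * |B.det| * |sin (φ - φ₀)| := by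
  set N := ‖Matrix.toEuclideanCLM (𝕜 := ℝ) B⁻¹‖
  have hstretch : ∀ {θ μ η}, 0 ≤ μ →
      mulV B (vec2 (cos θ) (sin θ)) = μ • vec2 (cos η) (sin η) → 1 ≤ N * μ := by
    intro θ μ η hμ hθ
    have := norm_le_norm_inv_mul_norm_mulV hB (vec2 (cos θ) (sin θ))
    rwa [hθ, norm_smul, norm_vec2_cos_sin, norm_vec2_cos_sin, mul_one, Real.norm_of_nonneg hμ]
      at this
  have hcross : m₀ * m * sin (ψ - ψ₀) = B.det * sin (φ - φ₀) := by
    have := cross_mulV B (vec2 (cos φ₀) (sin φ₀)) (vec2 (cos φ) (sin φ))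
    rwa [h₀, h, cross_smul_vec2_cos_sin, ← one_smul ℝ (vec2 (cos φ₀) _),
      ← one_smul ℝ (vec2 (cos φ) _), cross_smul_vec2_cos_sin, one_mul, one_mul] at this
  calc |sin (ψ - ψ₀)| ≤ |sin (ψ - ψ₀)| * ((N * m₀) * (N * m)) :=
        le_mul_of_one_le_right (abs_nonneg _)
          (one_le_mul_of_one_le_of_one_le (hstretch hm₀ h₀) (hstretch hm h))
    _ = N ^ 2 * |m₀ * m * sin (ψ - ψ₀)| := by
        rw [abs_mul, abs_mul, abs_of_nonneg hm₀, abs_of_nonneg hm]; ring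
    _ = N ^ 2 * |B.det| * |sin (φ - φ₀)| := by rw [hcross, abs_mul, mul_assoc]

/-- Let `B` be an invertible `2×2` real matrix and `φ₀ ∈ ℝ`. Then there
is an angle `ψ₀ ∈ ℝ` such that: for all `r ≥ 0` and `φ ∈ ℝ` there are `r' ≥ 0` and
`φ' ∈ ℝ` with `B(r·(cos φ, sin φ)) = r'·(cos φ', sin φ')` and
`min_{ω∈{0,π}} |φ' − (ψ₀+ω)| ≤ (π/2)·‖B⁻¹‖²·|det B|·min_{θ∈{0,π}} |φ − (φ₀+θ)|`,
`‖·‖` being the operator norm induced by the Euclidean norm on `ℝ²`. -/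
theorem linearMap_effect_on_angle (B : Matrix (Fin 2) (Fin 2) ℝ) (hB : IsUnit B.det)
    (φ₀ : ℝ) :
    ∃ ψ₀ : ℝ, ∀ r : ℝ, 0 ≤ r → ∀ φ : ℝ, ∃ r' φ' : ℝ, 0 ≤ r' ∧
      mulV B (r • vec2 (Real.cos φ) (Real.sin φ)) = r' • vec2 (Real.cos φ') (Real.sin φ') ∧
      min |φ' - ψ₀| |φ' - (ψ₀ + Real.pi)|
        ≤ Real.pi / 2 * ‖Matrix.toEuclideanCLM (𝕜 := ℝ) B⁻¹‖ ^ 2 * |B.det| *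
            min |φ - φ₀| |φ - (φ₀ + Real.pi)| := by
  obtain ⟨m₀, ψ₀, hm₀, h₀⟩ := exists_eq_smul_vec2_cos_sin (mulV B (vec2 (cos φ₀) (sin φ₀)))
  refine ⟨ψ₀, fun r hr φ => ?_⟩
  obtain ⟨m, ψ, hm, h⟩ := exists_eq_smul_vec2_cos_sin (mulV B (vec2 (cos φ) (sin φ)))
  obtain ⟨φ', hcos, hsin, hφ'⟩ := exists_cos_sin_eq_min_abs_sub_le ψ ψ₀
  refine ⟨r * m, φ', mul_nonneg hr hm, ?_, ?_⟩
  · rw [mulV_smul, h, smul_smul, hcos, hsin]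
  calc min |φ' - ψ₀| |φ' - (ψ₀ + π)| ≤ π / 2 * |sin (ψ - ψ₀)| := hφ'
    _ ≤ π / 2 * (‖Matrix.toEuclideanCLM (𝕜 := ℝ) B⁻¹‖ ^ 2 * |B.det| * |sin (φ - φ₀)|) := by
        gcongr
        exact abs_sin_sub_le_of_mulV_eq hB hm₀ hm h₀ h
    _ ≤ π / 2 * ‖Matrix.toEuclideanCLM (𝕜 := ℝ) B⁻¹‖ ^ 2 * |B.det| *
          min |φ - φ₀| |φ - (φ₀ + π)| := by
        simp only [← mul_assoc]
        gcongr
        exact abs_sin_sub_le_min_abs_sub φ φ₀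
end
end
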